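/- Let r, s, d > 0 and let Π₀(r,σ,d) = (∑_{k=0}^∞ r^k / ∏_{m=1}^{k} (σ + m·d))^{-1}. Then for every l ≥ 1, Π₀(r, s + l·d, d) > Π₀(r, s + (l−1)·d, d), and consequently the ratio Π₀(r,s,d) / ((s + l·d)·Π₀(r, s + l·d, d)) · s is strictly less than 1. -/

import Mathlib

open scoped BigOperators

/-- Term of the normalizing series of the birth-death queue:
`r^l / ∏_{m=1}^{l} (s + m·d)`, empty product = 1. -/
noncomputable def qterm (r s d : ℝ) (l : ℕ) : ℝ :=
  r ^ l / ∏ m ∈ Finset.Icc 1 l, (s + (m : ℝ) * d)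

/-- Stationary empty-queue probability `Π₀(r,s,d)`. -/
noncomputable def Pi0 (r s d : ℝ) : ℝ := (∑' l : ℕ, qterm r s d l)⁻¹

/-! Every term of the series `∑ₖ rᵏ / ∏_{m ≤ k} (σ + m d)` decreases in `σ`, the term `k = 1`
strictly, and the series is dominated by that of `exp (r / d)`. Hence the sum is strictly
decreasing in `σ` and `Π₀` is strictly increasing. The second claim follows because both
`σ` and `Π₀(r, σ, d)` increase from `σ = s` to `σ = s + l d`. -/

section Monotonicity

variable {r s d : ℝ}

lemma factorial_mul_pow_le_prod_Icc (hs : 0 ≤ s) (hd : 0 ≤ d) (k : ℕ) :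
    (k.factorial : ℝ) * d ^ k ≤ ∏ m ∈ Finset.Icc 1 k, (s + (m : ℝ) * d) := by
  have hprod : ∏ m ∈ Finset.Icc 1 k, ((m : ℝ) * d) = (k.factorial : ℝ) * d ^ k := by
    rw [Finset.prod_mul_distrib, Finset.prod_const, Nat.card_Icc, ← Nat.cast_prod,
      ← Finset.Ico_add_one_right_eq_Icc, Finset.prod_Ico_id_eq_factorial, Nat.add_sub_cancel]
  rw [← hprod]
  exact Finset.prod_le_prod (fun m _ => by positivity) (fun m _ => by linarith)

lemma prod_Icc_pos (hs : 0 ≤ s) (hd : 0 < d) (k : ℕ) :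
    0 < ∏ m ∈ Finset.Icc 1 k, (s + (m : ℝ) * d) :=
  (by positivity : (0 : ℝ) < k.factorial * d ^ k).trans_le (factorial_mul_pow_le_prod_Icc hs hd.le k)

lemma qterm_pos (hr : 0 < r) (hs : 0 ≤ s) (hd : 0 < d) (k : ℕ) : 0 < qterm r s d k :=
  div_pos (pow_pos hr k) (prod_Icc_pos hs hd k)

lemma qterm_le_pow_div_factorial (hr : 0 ≤ r) (hs : 0 ≤ s) (hd : 0 < d) (k : ℕ) :
    qterm r s d k ≤ (r / d) ^ k / k.factorial := by
  calc qterm r s d k ≤ r ^ k / (k.factorial * d ^ k) :=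
        div_le_div_of_nonneg_left (by positivity) (by positivity)
          (factorial_mul_pow_le_prod_Icc hs hd.le k)
    _ = (r / d) ^ k / k.factorial := by
        rw [div_pow]
        field_simp

lemma summable_qterm (hr : 0 < r) (hs : 0 ≤ s) (hd : 0 < d) : Summable (qterm r s d) :=
  (Real.summable_pow_div_factorial (r / d)).of_nonneg_of_le (fun k => (qterm_pos hr hs hd k).le)
    (qterm_le_pow_div_factorial hr.le hs hd)

lemma qterm_le_qterm_of_le {s' : ℝ} (hr : 0 ≤ r) (hs : 0 ≤ s) (hd : 0 < d) (hss' : s ≤ s')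
    (k : ℕ) : qterm r s' d k ≤ qterm r s d k :=
  div_le_div_of_nonneg_left (by positivity) (prod_Icc_pos hs hd k)
    (Finset.prod_le_prod (fun m _ => by positivity) (fun m _ => by linarith))

lemma qterm_one (r s d : ℝ) : qterm r s d 1 = r / (s + d) := by
  simp [qterm]

lemma tsum_qterm_pos (hr : 0 < r) (hs : 0 ≤ s) (hd : 0 < d) : 0 < ∑' k, qterm r s d k :=
  (summable_qterm hr hs hd).tsum_pos (fun k => (qterm_pos hr hs hd k).le) 0 (qterm_pos hr hs hd 0)

lemma tsum_qterm_strictAntiOn (hr : 0 < r) (hd : 0 < d) :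
    StrictAntiOn (fun σ => ∑' k, qterm r σ d k) (Set.Ici 0) := by
  intro s hs s' hs' hss'
  have hterm_one : qterm r s' d 1 < qterm r s d 1 := by
    rw [qterm_one, qterm_one]
    exact div_lt_div_of_pos_left hr (by linarith [Set.mem_Ici.mp hs]) (by linarith)
  exact (summable_qterm hr hs' hd).tsum_lt_tsum (qterm_le_qterm_of_le hr.le hs hd hss'.le)
    hterm_one (summable_qterm hr hs hd)

lemma Pi0_pos (hr : 0 < r) (hs : 0 ≤ s) (hd : 0 < d) : 0 < Pi0 r s d :=
  inv_pos.mpr (tsum_qterm_pos hr hs hd)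

lemma Pi0_strictMonoOn (hr : 0 < r) (hd : 0 < d) : StrictMonoOn (fun σ => Pi0 r σ d) (Set.Ici 0) :=
  fun _ hs _ hs' hss' => inv_strictAnti₀ (tsum_qterm_pos hr hs' hd)
    (tsum_qterm_strictAntiOn hr hd hs hs' hss')

end Monotonicity

theorem stmt9 (r s d : ℝ) (hr : 0 < r) (hs : 0 < s) (hd : 0 < d) :
    ∀ l : ℕ, 1 ≤ l →
      Pi0 r (s + (l : ℝ) * d) d > Pi0 r (s + ((l : ℝ) - 1) * d) d ∧
      s * Pi0 r s d / ((s + (l : ℝ) * d) * Pi0 r (s + (l : ℝ) * d) d) < 1 := by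
  intro l hl
  have hl1 : (1 : ℝ) ≤ l := by exact_mod_cast hl
  have hprev : 0 ≤ s + ((l : ℝ) - 1) * d := by nlinarith
  have hlt : s < s + (l : ℝ) * d := by nlinarith
  have hmono := Pi0_strictMonoOn hr hd
  refine ⟨hmono hprev (Set.mem_Ici.mpr (by linarith)) (by linarith), ?_⟩
  have hPi0 : Pi0 r s d < Pi0 r (s + (l : ℝ) * d) d :=
    hmono (Set.mem_Ici.mpr hs.le) (Set.mem_Ici.mpr (by linarith)) hlt
  rw [div_lt_one (mul_pos (hs.trans hlt) (Pi0_pos hr (by linarith) hd))]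
  exact mul_lt_mul hlt hPi0.le (Pi0_pos hr hs.le hd) (by linarith)
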